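/- arXiv:math/0508244 — 3 statements merged into one kernel-verified Lean document; each statement's English description precedes it below -/
import Mathlib

section
/- Let A ∈ M₂(ℝ) be the matrix with rows (1, 0) and (−c, 1) where c > 0, and let B(μ) = A + μ·E + O(μ²) where the (1,2) entry of E is −C·c′ for constants C and c′ > 0. Then for μ > 0 sufficiently small, the eigenvalues of B(μ) are 1 ± √(C·c·c′·μ) + O(μ). In particular, if C·c·c′ > 0 both eigenvalues are real with one greater than 1 (hyperbolic case), and if C·c·c′ < 0 they are complex conjugates on the unit circle to leading order (elliptic case). -/
/-!
Since `det B(μ) = 1`, the multipliers are `τ/2 ± √((τ/2)² - 1)` with `τ = tr B(μ)`. Differentiating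
`det B = 1` at the shear `B(0)` gives `τ(0) = 2` and `τ'(0) = -c · B'(0)₀₁ = C c c'`, so by
analyticity the discriminant is `C c c' μ + O(μ²)`. The principal square root of a real number
lies in the closed first quadrant, where `‖√a - √b‖ ≤ √|a - b|`; hence the square root of the
discriminant is `√(C c c' μ) + O(μ)`, and `τ/2 = 1 + O(μ)`.
-/

open Asymptotics Filter Topology

namespace Complex

lemma cpow_one_div_two_sq (x : ℂ) : (x ^ ((1 : ℂ) / 2)) ^ 2 = x := by
  rw [one_div]; exact cpow_ofNat_inv_pow x 2

lemma cpow_one_div_two_re_im_nonneg {x : ℂ} (hx : 0 ≤ x.im) :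
    0 ≤ (x ^ ((1 : ℂ) / 2)).re ∧ 0 ≤ (x ^ ((1 : ℂ) / 2)).im := by
  have h0 : 0 ≤ arg x := arg_nonneg_iff.mpr hx
  have hπ : arg x ≤ Real.pi := arg_le_pi x
  have half : (1 : ℂ) / 2 = ((1 / 2 : ℝ) : ℂ) := by norm_num
  rw [half, cpow_ofReal_re, cpow_ofReal_im]
  exact ⟨mul_nonneg (by positivity) (Real.cos_nonneg_of_mem_Icc ⟨by linarith, by linarith⟩),
    mul_nonneg (by positivity) (Real.sin_nonneg_of_nonneg_of_le_pi (by linarith) (by linarith))⟩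

lemma norm_sub_sq_le_norm_sq_sub_sq {u v : ℂ} (hu : 0 ≤ u.re ∧ 0 ≤ u.im)
    (hv : 0 ≤ v.re ∧ 0 ≤ v.im) : ‖u - v‖ ^ 2 ≤ ‖u ^ 2 - v ^ 2‖ := by
  -- `‖u + v‖² - ‖u - v‖² = 4 Re (u * conj v) ≥ 0` in the closed first quadrant
  have hle : ‖u - v‖ ≤ ‖u + v‖ := by
    rw [← sq_le_sq₀ (norm_nonneg _) (norm_nonneg _), ← normSq_eq_norm_sq, ← normSq_eq_norm_sq,
      normSq_apply, normSq_apply]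
    simp only [sub_re, sub_im, add_re, add_im]
    nlinarith [mul_nonneg hu.1 hv.1, mul_nonneg hu.2 hv.2]
  calc ‖u - v‖ ^ 2 = ‖u - v‖ * ‖u - v‖ := sq _
    _ ≤ ‖u - v‖ * ‖u + v‖ := mul_le_mul_of_nonneg_left hle (norm_nonneg _)
    _ = ‖u ^ 2 - v ^ 2‖ := by rw [← norm_mul]; ring_nf

lemma norm_cpow_one_div_two_sub_le {a b : ℂ} (ha : 0 ≤ a.im) (hb : 0 ≤ b.im) :
    ‖a ^ ((1 : ℂ) / 2) - b ^ ((1 : ℂ) / 2)‖ ≤ √‖a - b‖ := by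
  apply Real.le_sqrt_of_sq_le
  simpa only [cpow_one_div_two_sq] using norm_sub_sq_le_norm_sq_sub_sq
    (cpow_one_div_two_re_im_nonneg ha) (cpow_one_div_two_re_im_nonneg hb)

end Complex

lemma Asymptotics.IsBigO.ofReal_cpow_one_div_two_sub {α : Type*} {l : Filter α}
    {f g u : α → ℝ} (h : (fun x => f x - g x) =O[l] fun x => u x ^ 2) :
    (fun x => (f x : ℂ) ^ ((1 : ℂ) / 2) - (g x : ℂ) ^ ((1 : ℂ) / 2)) =O[l] u := by
  obtain ⟨K, hK, hKb⟩ := h.exists_nonneg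
  refine IsBigO.of_bound √K ?_
  filter_upwards [hKb.bound] with x hx
  calc _ ≤ √‖((f x - g x : ℝ) : ℂ)‖ := by
        push_cast
        exact Complex.norm_cpow_one_div_two_sub_le (by simp) (by simp)
    _ ≤ √(K * ‖u x‖ ^ 2) := by
        gcongr
        simpa only [Complex.norm_real, norm_pow] using hx
    _ = √K * ‖u x‖ := by rw [Real.sqrt_mul hK, Real.sqrt_sq (norm_nonneg _)]

lemma AnalyticAt.isBigO_sub_sub_smul_deriv {𝕜 E : Type*} [NontriviallyNormedField 𝕜]
    [NormedAddCommGroup E] [NormedSpace 𝕜 E] {f : 𝕜 → E} {x : 𝕜} (hf : AnalyticAt 𝕜 f x) :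
    (fun y => f y - f x - (y - x) • deriv f x) =O[𝓝 x] fun y => (y - x) ^ 2 := by
  obtain ⟨p, hp⟩ := hf
  have htaylor := (hp.isBigO_sub_partialSum_pow 2).comp_tendsto
    (tendsto_sub_nhds_zero_iff.mpr tendsto_id : Tendsto (fun y => y - x) (𝓝 x) (𝓝 0))
  have hcoeff : p.coeff 0 = f x := hp.coeff_zero _
  have hpartial : ∀ z, p.partialSum 2 z = f x + z • deriv f x := by
    simp [FormalMultilinearSeries.partialSum, Finset.sum_range_succ, hp.deriv, hcoeff]
  rw [← isBigO_norm_right]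
  simpa [Function.comp_def, hpartial, sub_sub] using htaylor

namespace Matrix

lemma isRoot_charpoly_fin_two {K : Type*} [Field K] [NeZero (2 : K)]
    (M : Matrix (Fin 2) (Fin 2) K) {s : K} (hs : s ^ 2 = (M.trace / 2) ^ 2 - M.det) :
    M.charpoly.IsRoot (M.trace / 2 + s) ∧ M.charpoly.IsRoot (M.trace / 2 - s) := by
  simp only [charpoly_fin_two, Polynomial.IsRoot, Polynomial.eval_add, Polynomial.eval_sub,
    Polynomial.eval_mul, Polynomial.eval_pow, Polynomial.eval_X, Polynomial.eval_C]
  have h2 : (2 : K)⁻¹ * 2 = 1 := inv_mul_cancel₀ two_ne_zero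
  constructor
  · linear_combination hs + (M.trace * s + M.trace ^ 2 * 2⁻¹) * h2
  · linear_combination hs + (M.trace ^ 2 * 2⁻¹ - M.trace * s) * h2

lemma isRoot_charpoly_map_ofReal_of_det_eq_one (M : Matrix (Fin 2) (Fin 2) ℝ) (hM : M.det = 1) :
    (M.map Complex.ofReal).charpoly.IsRoot
        ((M.trace / 2 : ℝ) + (((M.trace / 2) ^ 2 - 1 : ℝ) : ℂ) ^ ((1 : ℂ) / 2)) ∧
      (M.map Complex.ofReal).charpoly.IsRoot
        ((M.trace / 2 : ℝ) - (((M.trace / 2) ^ 2 - 1 : ℝ) : ℂ) ^ ((1 : ℂ) / 2)) := by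
  have htr : (M.map Complex.ofReal).trace = M.trace := by simp [trace_fin_two]
  have hdet : (M.map Complex.ofReal).det = 1 := by
    have h := Complex.ofRealHom.map_det M
    rw [hM] at h
    exact_mod_cast h.symm
  have hs := (M.map Complex.ofReal).isRoot_charpoly_fin_two
    (s := (((M.trace / 2) ^ 2 - 1 : ℝ) : ℂ) ^ ((1 : ℂ) / 2))
    (by rw [Complex.cpow_one_div_two_sq, htr, hdet]; push_cast; ring)
  rwa [htr, ← Complex.ofReal_ofNat, ← Complex.ofReal_div] at hs

lemma hasDerivAt_det_fin_two {𝕜 : Type*} [NontriviallyNormedField 𝕜]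
    {B : 𝕜 → Matrix (Fin 2) (Fin 2) 𝕜} {E : Matrix (Fin 2) (Fin 2) 𝕜} {x : 𝕜}
    (h : ∀ i j, HasDerivAt (fun μ => B μ i j) (E i j) x) :
    HasDerivAt (fun μ => (B μ).det)
      (E 0 0 * B x 1 1 + B x 0 0 * E 1 1 - (E 0 1 * B x 1 0 + B x 0 1 * E 1 0)) x := by
  simp_rw [det_fin_two]
  exact ((h 0 0).mul (h 1 1)).sub ((h 0 1).mul (h 1 0))

lemma hasDerivAt_trace_of_det_eq_one_of_eq_shear {𝕜 : Type*} [NontriviallyNormedField 𝕜]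
    {B : 𝕜 → Matrix (Fin 2) (Fin 2) 𝕜} {E : Matrix (Fin 2) (Fin 2) 𝕜} {x c : 𝕜}
    (hdet : ∀ μ, (B μ).det = 1) (hBx : B x = !![1, 0; -c, 1])
    (h : ∀ i j, HasDerivAt (fun μ => B μ i j) (E i j) x) :
    HasDerivAt (fun μ => (B μ).trace) (-(c * E 0 1)) x := by
  have hdet' := (hasDerivAt_det_fin_two h).unique
    (by simpa only [hdet] using hasDerivAt_const x (1 : 𝕜))
  simp only [hBx, of_apply, cons_val', cons_val_zero, cons_val_one, empty_val',
    cons_val_fin_one] at hdet'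
  simp only [trace_fin_two]
  exact ((h 0 0).add (h 1 1)).congr_deriv (by linear_combination hdet')

end Matrix

lemma isBigO_cpow_one_div_two_discr_sub {τ : ℝ → ℝ} {k : ℝ} (hτa : AnalyticAt ℝ τ 0)
    (hτ0 : τ 0 = 2) (hτ : HasDerivAt τ k 0) :
    (fun μ => (((τ μ / 2) ^ 2 - 1 : ℝ) : ℂ) ^ ((1 : ℂ) / 2) - ((k * μ : ℝ) : ℂ) ^ ((1 : ℂ) / 2))
      =O[𝓝 0] fun μ => μ := by
  have hD : HasDerivAt (fun μ => (τ μ / 2) ^ 2 - 1) k 0 :=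
    (((hτ.div_const 2).pow 2).sub_const 1).congr_deriv (by rw [hτ0]; ring)
  have hDa : AnalyticAt ℝ (fun μ => (τ μ / 2) ^ 2 - 1) 0 :=
    ((hτa.div_const).pow 2).sub analyticAt_const
  refine IsBigO.ofReal_cpow_one_div_two_sub ?_
  simpa [hτ0, hD.deriv, mul_comm] using hDa.isBigO_sub_sub_smul_deriv

theorem multiplier_splitting_general
    (C c c' : ℝ)
    (A : Matrix (Fin 2) (Fin 2) ℝ) (hA : A = !![1, 0; -c, 1])
    (B : ℝ → Matrix (Fin 2) (Fin 2) ℝ)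
    (E : Matrix (Fin 2) (Fin 2) ℝ)
    (hB0 : B 0 = A)
    (hdet : ∀ μ, (B μ).det = 1)
    (hanalytic : ∀ i j, AnalyticAt ℝ (fun μ => B μ i j) 0)
    (hderiv : ∀ i j, HasDerivAt (fun μ => B μ i j) (E i j) 0)
    (hE : E 0 1 = -C * c') :
    ∃ (ε : ℝ) (E₁ E₂ : ℝ → ℂ), 0 < ε ∧
      (E₁ =O[nhdsWithin 0 (Set.Ioi 0)] fun μ : ℝ => (μ : ℂ)) ∧
      (E₂ =O[nhdsWithin 0 (Set.Ioi 0)] fun μ : ℝ => (μ : ℂ)) ∧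
      ∀ μ ∈ Set.Ioo (0:ℝ) ε,
        ((B μ).map (Complex.ofReal)).charpoly.IsRoot
            (1 + (((C*c*c'*μ : ℝ) : ℂ)) ^ ((1:ℂ)/2) + E₁ μ) ∧
        ((B μ).map (Complex.ofReal)).charpoly.IsRoot
            (1 - (((C*c*c'*μ : ℝ) : ℂ)) ^ ((1:ℂ)/2) + E₂ μ) := by
  subst hA
  set τ : ℝ → ℝ := fun μ => (B μ).trace
  have hτ0 : τ 0 = 2 := by norm_num [τ, hB0, Matrix.trace_fin_two]
  have hτ : HasDerivAt τ (C * c * c') 0 :=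
    (Matrix.hasDerivAt_trace_of_det_eq_one_of_eq_shear hdet hB0 hderiv).congr_deriv
      (by rw [hE]; ring)
  have hτa : AnalyticAt ℝ τ 0 := by
    simp only [τ, Matrix.trace_fin_two]
    exact (hanalytic 0 0).add (hanalytic 1 1)
  have hsqrt := isBigO_cpow_one_div_two_discr_sub hτa hτ0 hτ
  have htrace : (fun μ => ((τ μ / 2 - 1 : ℝ) : ℂ)) =O[𝓝 0] fun μ => μ := by
    rw [Complex.isBigO_ofReal_left]
    simpa [hτ0] using (hτ.div_const 2).hasFDerivAt.isBigO_sub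
  set δ : ℝ → ℂ := fun μ => (((τ μ / 2) ^ 2 - 1 : ℝ) : ℂ) ^ ((1 : ℂ) / 2)
    - ((C * c * c' * μ : ℝ) : ℂ) ^ ((1 : ℂ) / 2)
  refine ⟨1, fun μ => ((τ μ / 2 - 1 : ℝ) : ℂ) + δ μ, fun μ => ((τ μ / 2 - 1 : ℝ) : ℂ) - δ μ,
    one_pos, Complex.isBigO_ofReal_right.mpr ((htrace.add hsqrt).mono nhdsWithin_le_nhds),
    Complex.isBigO_ofReal_right.mpr ((htrace.sub hsqrt).mono nhdsWithin_le_nhds), fun μ _ => ?_⟩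
  obtain ⟨h₁, h₂⟩ := (B μ).isRoot_charpoly_map_ofReal_of_det_eq_one (hdet μ)
  constructor
  · convert h₁ using 1; push_cast [δ, τ]; ring
  · convert h₂ using 1; push_cast [δ, τ]; ring

/-- Eigenvalue splitting of a perturbed unipotent shear: if B(0) is the shear
with lower-left entry -c, det B(μ) = 1, and the (0,1) entry of B'(0) is -C·c',
then for small μ > 0 the eigenvalues of B(μ) are 1 ± √(C·c·c'·μ) + O(μ). -/
theorem multiplier_splitting
    (C c c' : ℝ) (hc : 0 < c) (hc' : 0 < c')
    (A : Matrix (Fin 2) (Fin 2) ℝ) (hA : A = !![1, 0; -c, 1])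
    (B : ℝ → Matrix (Fin 2) (Fin 2) ℝ)
    (E : Matrix (Fin 2) (Fin 2) ℝ)
    (hB0 : B 0 = A)
    (hdet : ∀ μ, (B μ).det = 1)
    (hanalytic : ∀ i j, AnalyticAt ℝ (fun μ => B μ i j) 0)
    (hderiv : ∀ i j, HasDerivAt (fun μ => B μ i j) (E i j) 0)
    (hE : E 0 1 = -C * c') :
    ∃ (ε : ℝ) (E₁ E₂ : ℝ → ℂ), 0 < ε ∧
      (E₁ =O[nhdsWithin 0 (Set.Ioi 0)] fun μ : ℝ => (μ : ℂ)) ∧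
      (E₂ =O[nhdsWithin 0 (Set.Ioi 0)] fun μ : ℝ => (μ : ℂ)) ∧
      ∀ μ ∈ Set.Ioo (0:ℝ) ε,
        ((B μ).map (Complex.ofReal)).charpoly.IsRoot
            (1 + (((C*c*c'*μ : ℝ) : ℂ)) ^ ((1:ℂ)/2) + E₁ μ) ∧
        ((B μ).map (Complex.ofReal)).charpoly.IsRoot
            (1 - (((C*c*c'*μ : ℝ) : ℂ)) ^ ((1:ℂ)/2) + E₂ μ) :=
  multiplier_splitting_general C c c' A hA B E hB0 hdet hanalytic hderiv hE
end

section
/- Let f(x) be real-analytic at x₀ ≠ 0 and let D denote the operator x·d/dx. Then for |δ| sufficiently small, f((1+δ)x₀) = Σ_{k=0}^{∞} binom(D, k)(f)(x₀)·δ^k, where binom(D,k) = D(D−1)⋯(D−k+1)/k!; i.e., the binomial expansion (1+δ)^D applied to f at x₀ converges to f((1+δ)x₀). -/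
/-!
Applying `D = x d/dx` to `x ^ k g` gives `k x ^ k g + x ^ (k + 1) g'`, so by induction
`D (D - 1) ⋯ (D - k + 1) f = x ^ k f⁽ᵏ⁾`. The claimed series is therefore the Taylor series of `f`
at `x₀` evaluated at the increment `δ x₀`, which converges to `f (x₀ + δ x₀)` once `|δ x₀|` is
below the radius of convergence.
-/

/-- Iterated Euler operator falling factorial: D(D-1)⋯(D-k+1) where D = x d/dx. -/
noncomputable def eulerFalling : ℕ → (ℝ → ℝ) → (ℝ → ℝ)
  | 0, f => f
  | (k+1), f => fun x => x * deriv (eulerFalling k f) x - (k:ℝ) * eulerFalling k f x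

open Nat

theorem AnalyticAt.exists_pos_hasSum_iteratedDeriv {𝕜 E : Type*} [NontriviallyNormedField 𝕜]
    [CharZero 𝕜] [NormedAddCommGroup E] [NormedSpace 𝕜 E] [CompleteSpace E] {f : 𝕜 → E} {x : 𝕜}
    (hf : AnalyticAt 𝕜 f x) :
    ∃ ρ > 0, ∀ y : 𝕜, ‖y‖ < ρ →
      HasSum (fun n ↦ (n ! : 𝕜)⁻¹ • y ^ n • iteratedDeriv n f x) (f (x + y)) := by
  obtain ⟨p, r, hp⟩ := hf
  obtain ⟨ρ, hρ0, hρr⟩ := ENNReal.lt_iff_exists_nnreal_btwn.mp hp.r_pos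
  refine ⟨ρ, by exact_mod_cast hρ0, fun y hy ↦ ?_⟩
  have hy : y ∈ Metric.eball 0 r := by
    rw [Metric.mem_eball, edist_zero_right]
    exact lt_trans (by exact_mod_cast hy) hρr
  simpa only [iteratedFDeriv_apply_eq_iteratedDeriv_mul_prod, Finset.prod_const,
    Finset.card_univ, Fintype.card_fin, smul_smul] using hp.hasSum_iteratedFDeriv hy

theorem eulerFalling_eq_pow_mul_iteratedDeriv {f : ℝ → ℝ} {x : ℝ} (hf : AnalyticAt ℝ f x)
    (k : ℕ) : eulerFalling k f x = x ^ k * iteratedDeriv k f x := by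
  induction k generalizing x with
  | zero => simp [eulerFalling]
  | succ k ih =>
    have hderiv : deriv (eulerFalling k f) x = deriv (fun y ↦ y ^ k * iteratedDeriv k f y) x :=
      Filter.EventuallyEq.deriv_eq <| hf.eventually_analyticAt.mono fun y hy ↦ ih hy
    have hdiff : DifferentiableAt ℝ (iteratedDeriv k f) x := by
      rw [iteratedDeriv_eq_iterate]
      exact (hf.iterated_deriv k).differentiableAt
    change x * deriv (eulerFalling k f) x - k * eulerFalling k f x = _
    rw [hderiv, deriv_fun_mul (differentiableAt_pow k) hdiff, deriv_pow_field,
      ← iteratedDeriv_succ, ih hf]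
    cases k with
    | zero => simp
    | succ m => push_cast; ring

/-- For f analytic at x₀ ≠ 0 and |δ| small,
f((1+δ)x₀) = Σ_k binom(D,k)f(x₀) δ^k where D = x d/dx. -/
theorem euler_operator_binomial_expansion
    (f : ℝ → ℝ) (x₀ : ℝ) (hx : x₀ ≠ 0) (hf : AnalyticAt ℝ f x₀) :
    ∃ ε > (0:ℝ), ∀ δ : ℝ, |δ| < ε →
      HasSum (fun k : ℕ => eulerFalling k f x₀ / k.factorial * δ^k)
        (f ((1 + δ) * x₀)) := by
  obtain ⟨ρ, hρ, hsum⟩ := hf.exists_pos_hasSum_iteratedDeriv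
  have hx' : 0 < |x₀| := abs_pos.mpr hx
  refine ⟨ρ / |x₀|, by positivity, fun δ hδ ↦ ?_⟩
  have hδx : ‖δ * x₀‖ < ρ := by
    rw [norm_mul, Real.norm_eq_abs, Real.norm_eq_abs, ← lt_div_iff₀ hx']
    exact hδ
  have hterm (k : ℕ) : (k ! : ℝ)⁻¹ • (δ * x₀) ^ k • iteratedDeriv k f x₀ =
      eulerFalling k f x₀ / k ! * δ ^ k := by
    rw [eulerFalling_eq_pow_mul_iteratedDeriv hf, smul_eq_mul, smul_eq_mul]
    ring
  rw [show (1 + δ) * x₀ = x₀ + δ * x₀ by ring]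
  simpa only [hterm] using hsum (δ * x₀) hδx
end

section
/- Let G ≠ 0, C < 0, and fixed K with G+2C < 0, K+1 > 0, and (K+1)² + G²(G+2C)/4 > 0. With r_min² + r_max² = 2(K+1)/(−G−2C) and r_min²·r_max² = G²/(4(−G−2C)), the action integral (1/π)∫_{r_min}^{r_max} √(8K+8 − G²/r² + 4r²(G+2C)) dr equals (K+1)/√(−G−2C) − |G|/2. -/
/-!
With `D = -G - 2C`, `a = rmin²`, `b = rmax²`, the radicand factors as
`4D (b - r²)(r² - a) / r²`, so the integral is `2√D ∫ √((b - r²)(r² - a)) / r dr`.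
The substitution `u = r²` turns this into `√D ∫ₐᵇ √((b - u)(u - a)) / u du`, which has an
elementary primitive (a square root and two arcsines) and equals `π ((a + b)/2 - √(ab))`.
Vieta's relations give `(a + b)/2 = (K + 1)/D` and `√(ab) = |G| / (2√D)`.
-/

open Real Set intervalIntegral

theorem HasDerivAt.arcsin_of_one_sub_sq_eq {f : ℝ → ℝ} {f' s x : ℝ} (hf : HasDerivAt f f' x)
    (hs : 0 < s) (h : 1 - f x ^ 2 = s ^ 2) : HasDerivAt (fun y => arcsin (f y)) (f' / s) x := by
  have hne : ∀ t : ℝ, t ^ 2 = 1 → f x ≠ t := by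
    rintro t ht rfl; nlinarith
  have := (hasDerivAt_arcsin (hne (-1) (by norm_num)) (hne 1 (by norm_num))).comp x hf
  rwa [h, sqrt_sq hs.le, one_div_mul_eq_div] at this

section

variable {a b u : ℝ}

noncomputable def sqrtQuadDivPrimitive (a b u : ℝ) : ℝ :=
  √((b - u) * (u - a)) + (a + b) / 2 * arcsin ((2 * u - a - b) / (b - a))
    - √(a * b) * arcsin (((a + b) * u - 2 * a * b) / ((b - a) * u))

theorem hasDerivAt_sqrt_quad (hu : u ∈ Ioo a b) :
    HasDerivAt (fun u => √((b - u) * (u - a)))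
      ((a + b - 2 * u) / (2 * √((b - u) * (u - a)))) u := by
  have hd : HasDerivAt (fun u => (b - u) * (u - a)) (a + b - 2 * u) u :=
    (((hasDerivAt_id' u).const_sub b).mul ((hasDerivAt_id' u).sub_const a)).congr_deriv
      (by ring)
  exact hd.sqrt (mul_pos (sub_pos.2 hu.2) (sub_pos.2 hu.1)).ne'

theorem hasDerivAt_arcsin_affine (hu : u ∈ Ioo a b) :
    HasDerivAt (fun u => arcsin ((2 * u - a - b) / (b - a)))
      (1 / √((b - u) * (u - a))) u := by
  have hba : 0 < b - a := by linarith [hu.1, hu.2]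
  have hP : 0 < (b - u) * (u - a) := mul_pos (sub_pos.2 hu.2) (sub_pos.2 hu.1)
  have hf : HasDerivAt (fun u => (2 * u - a - b) / (b - a)) (2 / (b - a)) u :=
    (((((hasDerivAt_id' u).const_mul 2).sub_const a).sub_const b).div_const (b - a)).congr_deriv
      (by ring)
  refine (hf.arcsin_of_one_sub_sq_eq (s := 2 * √((b - u) * (u - a)) / (b - a))
    (by positivity) ?_).congr_deriv ?_
  · simp only [div_pow, mul_pow]
    rw [sq_sqrt hP.le]
    field_simp; ring
  · field_simp

theorem hasDerivAt_arcsin_moebius (ha : 0 < a) (hu : u ∈ Ioo a b) :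
    HasDerivAt (fun u => arcsin (((a + b) * u - 2 * a * b) / ((b - a) * u)))
      (√(a * b) / (u * √((b - u) * (u - a)))) u := by
  have hba : 0 < b - a := by linarith [hu.1, hu.2]
  have hu0 : 0 < u := ha.trans hu.1
  have hab : 0 < a * b := mul_pos ha (ha.trans (hu.1.trans hu.2))
  have hP : 0 < (b - u) * (u - a) := mul_pos (sub_pos.2 hu.2) (sub_pos.2 hu.1)
  have hc2 : √(a * b) ^ 2 = a * b := sq_sqrt hab.le
  have hf : HasDerivAt (fun u => ((a + b) * u - 2 * a * b) / ((b - a) * u))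
      (2 * a * b / ((b - a) * u ^ 2)) u :=
    ((((hasDerivAt_id' u).const_mul (a + b)).sub_const (2 * a * b)).div
      ((hasDerivAt_id' u).const_mul (b - a)) (by positivity)).congr_deriv
      (by field_simp; ring)
  refine (hf.arcsin_of_one_sub_sq_eq
    (s := 2 * √(a * b) * √((b - u) * (u - a)) / ((b - a) * u)) (by positivity) ?_).congr_deriv ?_
  · simp only [div_pow, mul_pow]
    rw [hc2, sq_sqrt hP.le]
    field_simp; ring
  · have := sqrt_pos.2 hab
    field_simp; rw [hc2]

/-- With `q = √((b - u)(u - a))`, the three terms contribute `(a + b - 2u)/(2q)`, `(a + b)/(2q)`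
and `-ab/(uq)`, which add up to `(b - u)(u - a)/(uq) = q/u`. -/
theorem hasDerivAt_sqrtQuadDivPrimitive (ha : 0 < a) (hu : u ∈ Ioo a b) :
    HasDerivAt (sqrtQuadDivPrimitive a b) (√((b - u) * (u - a)) / u) u := by
  have hu0 : 0 < u := ha.trans hu.1
  have hP : 0 < (b - u) * (u - a) := mul_pos (sub_pos.2 hu.2) (sub_pos.2 hu.1)
  have hq := sqrt_pos.2 hP
  have hc2 : √(a * b) ^ 2 = a * b := sq_sqrt (by nlinarith [hu.1, hu.2])
  refine (((hasDerivAt_sqrt_quad hu).add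
    ((hasDerivAt_arcsin_affine hu).const_mul ((a + b) / 2))).sub
    ((hasDerivAt_arcsin_moebius ha hu).const_mul √(a * b))).congr_deriv ?_
  field_simp
  linear_combination (-2) * (sq_sqrt hP.le) - 2 * hc2

theorem continuousOn_sqrtQuadDivPrimitive (ha : 0 < a) (hab : a < b) :
    ContinuousOn (sqrtQuadDivPrimitive a b) (Icc a b) := by
  have hden : ∀ u ∈ Icc a b, (b - a) * u ≠ 0 := fun u hu =>
    mul_ne_zero (sub_pos.2 hab).ne' (ha.trans_le hu.1).ne'
  unfold sqrtQuadDivPrimitive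
  fun_prop (disch := assumption)

theorem sqrtQuadDivPrimitive_sub (ha : 0 < a) (hab : a < b) :
    sqrtQuadDivPrimitive a b b - sqrtQuadDivPrimitive a b a = π * ((a + b) / 2 - √(a * b)) := by
  have hba : b - a ≠ 0 := (sub_pos.2 hab).ne'
  have hb : b ≠ 0 := (ha.trans hab).ne'
  have h1 : (2 * b - a - b) / (b - a) = 1 := by rw [div_eq_one_iff_eq hba]; ring
  have h2 : ((a + b) * b - 2 * a * b) / ((b - a) * b) = 1 := by
    rw [div_eq_one_iff_eq (mul_ne_zero hba hb)]; ring
  have h3 : (2 * a - a - b) / (b - a) = -1 := by rw [div_eq_iff hba]; ring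
  have h4 : ((a + b) * a - 2 * a * b) / ((b - a) * a) = -1 := by
    rw [div_eq_iff (mul_ne_zero hba ha.ne')]; ring
  simp only [sqrtQuadDivPrimitive, h1, h2, h3, h4, sub_self, zero_mul, mul_zero, sqrt_zero,
    arcsin_one, arcsin_neg_one]
  ring

theorem integral_sqrt_quad_div_self (ha : 0 < a) (hab : a < b) :
    ∫ u in a..b, √((b - u) * (u - a)) / u = π * ((a + b) / 2 - √(a * b)) := by
  have hcont : ContinuousOn (fun u => √((b - u) * (u - a)) / u) (uIcc a b) := by
    rw [uIcc_of_le hab.le]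
    exact ContinuousOn.div (by fun_prop) (by fun_prop) fun u hu => (ha.trans_le hu.1).ne'
  rw [integral_eq_sub_of_hasDerivAt_of_le hab.le (continuousOn_sqrtQuadDivPrimitive ha hab)
    (fun u hu => hasDerivAt_sqrtQuadDivPrimitive ha hu) hcont.intervalIntegrable,
    sqrtQuadDivPrimitive_sub ha hab]

end

theorem integral_sqrt_sq_quad_div_self {r₁ r₂ : ℝ} (h₀ : 0 < r₁) (h₁₂ : r₁ < r₂) :
    ∫ r in r₁..r₂, √((r₂ ^ 2 - r ^ 2) * (r ^ 2 - r₁ ^ 2)) / r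
      = π * ((r₁ ^ 2 + r₂ ^ 2) / 2 - r₁ * r₂) / 2 := by
  set g : ℝ → ℝ := fun u => √((r₂ ^ 2 - u) * (u - r₁ ^ 2)) / u
  have hsubst : ∀ r ∈ uIcc r₁ r₂,
      √((r₂ ^ 2 - r ^ 2) * (r ^ 2 - r₁ ^ 2)) / r = 1 / 2 * ((g ∘ (· ^ 2)) r * (2 * r)) := by
    intro r hr
    rw [uIcc_of_le h₁₂.le] at hr
    have := h₀.trans_le hr.1
    simp only [g, Function.comp]
    field_simp
  have hg : ContinuousOn g ((· ^ 2) '' uIcc r₁ r₂) := by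
    refine ContinuousOn.div (by fun_prop) (by fun_prop) ?_
    rintro _ ⟨r, hr, rfl⟩
    rw [uIcc_of_le h₁₂.le] at hr
    exact pow_ne_zero 2 (h₀.trans_le hr.1).ne'
  rw [integral_congr hsubst, integral_const_mul,
    integral_comp_mul_deriv' (fun r _ => by simpa using hasDerivAt_pow 2 r) (by fun_prop) hg,
    integral_sqrt_quad_div_self (by positivity) (pow_lt_pow_left₀ h₁₂ h₀.le two_ne_zero),
    ← mul_pow, sqrt_sq (mul_pos h₀ (h₀.trans h₁₂)).le]
  ring

theorem sqrt_radial_integrand_eq {K G C a b r : ℝ} (hD : G + 2 * C < 0)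
    (hsum : a + b = 2 * (K + 1) / (-G - 2 * C)) (hprod : a * b = G ^ 2 / (4 * (-G - 2 * C)))
    (hr : 0 < r) :
    √(8 * K + 8 - G ^ 2 / r ^ 2 + 4 * r ^ 2 * (G + 2 * C))
      = 2 * √(-G - 2 * C) * (√((b - r ^ 2) * (r ^ 2 - a)) / r) := by
  have hD' : -G - 2 * C ≠ 0 := by linarith
  have hfactor : 8 * K + 8 - G ^ 2 / r ^ 2 + 4 * r ^ 2 * (G + 2 * C)
      = 2 ^ 2 * (-G - 2 * C) * ((b - r ^ 2) * (r ^ 2 - a)) / r ^ 2 := by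
    field_simp at hsum hprod ⊢
    linear_combination (-4 * r ^ 2) * hsum + hprod
  rw [hfactor, sqrt_div' _ (by positivity), sqrt_mul (by linarith), sqrt_mul (by norm_num),
    sqrt_sq (by norm_num), sqrt_sq hr.le]
  ring

theorem radial_action_integral_general
    (K G C rmin rmax : ℝ)
    (h1 : G + 2*C < 0)
    (hrmin : 0 < rmin) (hlt : rmin < rmax)
    (hsum : rmin^2 + rmax^2 = 2*(K + 1)/(-G - 2*C))
    (hprod : rmin^2 * rmax^2 = G^2/(4*(-G - 2*C))) :
    (1/π) * ∫ r in rmin..rmax,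
        Real.sqrt (8*K + 8 - G^2/r^2 + 4*r^2*(G + 2*C))
      = (K + 1)/Real.sqrt (-G - 2*C) - |G|/2 := by
  have hD : 0 < -G - 2 * C := by linarith
  have hsqrtD : 0 < √(-G - 2 * C) := sqrt_pos.2 hD
  have hD2 : √(-G - 2 * C) ^ 2 = -G - 2 * C := sq_sqrt hD.le
  have hrr : rmin * rmax = |G| / (2 * √(-G - 2 * C)) := by
    refine (sq_eq_sq₀ (mul_pos hrmin (hrmin.trans hlt)).le (by positivity)).1 ?_
    rw [mul_pow, hprod, div_pow, mul_pow, hD2, sq_abs]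
    ring
  have hintegrand : ∀ r ∈ uIcc rmin rmax, √(8*K + 8 - G^2/r^2 + 4*r^2*(G + 2*C))
      = 2 * √(-G - 2 * C) * (√((rmax ^ 2 - r ^ 2) * (r ^ 2 - rmin ^ 2)) / r) := fun r hr =>
    sqrt_radial_integrand_eq h1 hsum hprod (hrmin.trans_le (uIcc_of_le hlt.le ▸ hr).1)
  rw [integral_congr hintegrand, integral_const_mul, integral_sqrt_sq_quad_div_self hrmin hlt,
    hsum, hrr]
  field_simp [hD.ne']
  linear_combination (2 * (K + 1)) * hD2

/-- The radial action integral of the regularized rotating Kepler problem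
evaluates to (K+1)/√(-G-2C) - |G|/2. -/
theorem radial_action_integral
    (K G C rmin rmax : ℝ)
    (hG : G ≠ 0) (hC : C < 0)
    (h1 : G + 2*C < 0) (h2 : 0 < K + 1)
    (h3 : 0 < (K + 1)^2 + G^2*(G + 2*C)/4)
    (hrmin : 0 < rmin) (hlt : rmin < rmax)
    (hsum : rmin^2 + rmax^2 = 2*(K + 1)/(-G - 2*C))
    (hprod : rmin^2 * rmax^2 = G^2/(4*(-G - 2*C))) :
    (1/π) * ∫ r in rmin..rmax,
        Real.sqrt (8*K + 8 - G^2/r^2 + 4*r^2*(G + 2*C))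
      = (K + 1)/Real.sqrt (-G - 2*C) - |G|/2 :=
  radial_action_integral_general K G C rmin rmax h1 hrmin hlt hsum hprod
end
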